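/- arXiv:1510.04480 — 8 statements merged into one kernel-verified Lean document; each statement's English description precedes it below -/
import Mathlib

section
/- Let X be an additive commutative monoid and A ⊆ X. Then the convex hull of A, defined as the intersection of all convex subsets of X containing A, equals the set of all x ∈ X for which there exist n ≥ 1, positive integers m₁,…,mₙ, and points x₁,…,xₙ ∈ A such that (m₁+⋯+mₙ) • x = m₁ • x₁ + ⋯ + mₙ • xₙ. -/
/-- A subset of an additive commutative monoid is convex: it contains any `x` such that
`(m₁+⋯+mₙ) • x = m₁ • x₁ + ⋯ + mₙ • xₙ` for points `xᵢ` of the set and positive integers `mᵢ`. -/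
def GConvex {X : Type*} [AddCommMonoid X] (A : Set X) : Prop :=
  ∀ (n : ℕ), 0 < n → ∀ m : Fin n → ℕ, (∀ i, 0 < m i) →
    ∀ xs : Fin n → X, (∀ i, xs i ∈ A) →
      ∀ x : X, (∑ i, m i) • x = ∑ i, m i • xs i → x ∈ A

/-- Weighted combinations, Finset form. -/
def Comb {X : Type*} [AddCommMonoid X] (A : Set X) : Set X :=
  {x | ∃ t : Finset X, t.Nonempty ∧ (∀ y ∈ t, y ∈ A) ∧ ∃ w : X → ℕ,
    (∀ y ∈ t, 0 < w y) ∧ (∑ y ∈ t, w y) • x = ∑ y ∈ t, w y • y}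

theorem mem_comb_of_fin {X : Type*} [AddCommMonoid X] (A : Set X) (x : X)
    (n : ℕ) (hn : 0 < n) (m : Fin n → ℕ) (xs : Fin n → X)
    (hm : ∀ i, 0 < m i) (hxs : ∀ i, xs i ∈ A)
    (h : (∑ i, m i) • x = ∑ i, m i • xs i) : x ∈ Comb A := by
  classical
  refine ⟨Finset.univ.image xs, ?_, ?_, fun y => ∑ i ∈ Finset.univ.filter (xs · = y), m i,
    ?_, ?_⟩
  · exact (Finset.image_nonempty).2 ⟨⟨0, hn⟩, Finset.mem_univ _⟩
  · intro y hy
    obtain ⟨i, _, rfl⟩ := Finset.mem_image.1 hy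
    exact hxs i
  · intro y hy
    obtain ⟨i, _, rfl⟩ := Finset.mem_image.1 hy
    exact Finset.sum_pos (fun j _ => hm j) ⟨i, Finset.mem_filter.2 ⟨Finset.mem_univ _, rfl⟩⟩
  · have h1 : ∑ y ∈ Finset.univ.image xs, ∑ i ∈ Finset.univ.filter (xs · = y), m i
        = ∑ i, m i :=
      Finset.sum_fiberwise_of_maps_to (fun i _ => Finset.mem_image_of_mem xs (Finset.mem_univ i)) m
    have h2 : ∑ y ∈ Finset.univ.image xs, (∑ i ∈ Finset.univ.filter (xs · = y), m i) • y
        = ∑ i, m i • xs i := by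
      rw [← Finset.sum_fiberwise_of_maps_to
        (fun i _ => Finset.mem_image_of_mem xs (Finset.mem_univ i)) (fun i => m i • xs i)]
      refine Finset.sum_congr rfl fun y _ => ?_
      rw [Finset.sum_smul]
      exact Finset.sum_congr rfl fun i hi => by
        rw [(Finset.mem_filter.1 hi).2]
    rw [h1, h, ← h2]

theorem comb_to_fin {X : Type*} [AddCommMonoid X] (A : Set X) (x : X)
    (hx : x ∈ Comb A) :
    ∃ (n : ℕ), 0 < n ∧ ∃ (m : Fin n → ℕ) (xs : Fin n → X),
      (∀ i, 0 < m i) ∧ (∀ i, xs i ∈ A) ∧ (∑ i, m i) • x = ∑ i, m i • xs i := by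
  classical
  obtain ⟨t, ht, htA, w, hw, hsum⟩ := hx
  have e := t.equivFin
  refine ⟨t.card, Finset.card_pos.2 ht, fun i => w (e.symm i), fun i => (e.symm i : X),
    fun i => hw _ (e.symm i).2, fun i => htA _ (e.symm i).2, ?_⟩
  have h1 : ∑ i, w ((e.symm i : t) : X) = ∑ y ∈ t, w y := by
    rw [← Finset.sum_coe_sort t w]
    exact Equiv.sum_comp e.symm (fun a : t => w (a : X))
  have h2 : ∑ i, w ((e.symm i : t) : X) • ((e.symm i : t) : X) = ∑ y ∈ t, w y • y := by
    rw [← Finset.sum_coe_sort t (fun y => w y • y)]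
    exact Equiv.sum_comp e.symm (fun a : t => w (a : X) • (a : X))
  rw [h1, h2, hsum]

theorem gconvex_comb {X : Type*} [AddCommMonoid X] (A : Set X) : GConvex (Comb A) := by
  classical
  intro n hn m hm xs hxs x hx
  choose t ht htA w hw hs using hxs
  set N : Fin n → ℕ := fun i => ∑ z ∈ t i, w i z with hN
  have hNpos : ∀ i, 0 < N i := fun i => Finset.sum_pos (fun z hz => hw i z hz) (ht i)
  set P : ℕ := ∏ i, N i with hP
  have hPpos : 0 < P := Finset.prod_pos (fun i _ => hNpos i)
  have hdvd : ∀ i, N i ∣ P := fun i => Finset.dvd_prod_of_mem N (Finset.mem_univ i)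
  have hdm : ∀ i, P / N i * N i = P := fun i => Nat.div_mul_cancel (hdvd i)
  have hqpos : ∀ i, 0 < P / N i := fun i =>
    Nat.div_pos (Nat.le_of_dvd hPpos (hdvd i)) (hNpos i)
  set T : Finset X := Finset.univ.biUnion t with hT
  set u : X → ℕ := fun z => ∑ i, m i * (P / N i) * (if z ∈ t i then w i z else 0) with hu
  have hsub : ∀ i, t i ⊆ T := fun i z hz => Finset.mem_biUnion.2 ⟨i, Finset.mem_univ i, hz⟩
  refine ⟨T, ?_, ?_, u, ?_, ?_⟩
  · obtain ⟨z, hz⟩ := ht ⟨0, hn⟩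
    exact ⟨z, hsub _ hz⟩
  · intro z hz
    obtain ⟨i, _, hi⟩ := Finset.mem_biUnion.1 hz
    exact htA i z hi
  · intro z hz
    obtain ⟨i, _, hi⟩ := Finset.mem_biUnion.1 hz
    refine Finset.sum_pos' (fun j _ => Nat.zero_le _) ⟨i, Finset.mem_univ i, ?_⟩
    simp only [hi, if_true]
    exact Nat.mul_pos (Nat.mul_pos (hm i) (hqpos i)) (hw i z hi)
  · have hinner : ∀ i, ∑ z ∈ T, (if z ∈ t i then w i z else 0) = N i := by
      intro i
      rw [Finset.sum_ite_mem, Finset.inter_eq_right.2 (hsub i)]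
    have hWsum : ∑ z ∈ T, u z = (∑ i, m i) * P := by
      rw [hu]
      rw [Finset.sum_comm]
      calc ∑ i, ∑ z ∈ T, m i * (P / N i) * (if z ∈ t i then w i z else 0)
          = ∑ i, m i * (P / N i) * N i := by
            refine Finset.sum_congr rfl fun i _ => ?_
            rw [← Finset.mul_sum, hinner i]
        _ = ∑ i, m i * P := by
            refine Finset.sum_congr rfl fun i _ => ?_
            rw [mul_assoc, hdm i]
        _ = (∑ i, m i) * P := (Finset.sum_mul _ _ _).symm
    have hVsum : ∑ z ∈ T, u z • z = ∑ i, (m i * P) • xs i := by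
      rw [hu]
      calc ∑ z ∈ T, (∑ i, m i * (P / N i) * (if z ∈ t i then w i z else 0)) • z
          = ∑ z ∈ T, ∑ i, (m i * (P / N i) * (if z ∈ t i then w i z else 0)) • z := by
            refine Finset.sum_congr rfl fun z _ => Finset.sum_smul
        _ = ∑ i, ∑ z ∈ T, (m i * (P / N i) * (if z ∈ t i then w i z else 0)) • z :=
            Finset.sum_comm
        _ = ∑ i, (m i * (P / N i)) • ∑ z ∈ T, (if z ∈ t i then w i z • z else 0) := by
            refine Finset.sum_congr rfl fun i _ => ?_
            rw [Finset.smul_sum]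
            refine Finset.sum_congr rfl fun z _ => ?_
            rw [mul_smul]
            congr 1
            split <;> simp
        _ = ∑ i, (m i * (P / N i)) • (N i • xs i) := by
            refine Finset.sum_congr rfl fun i _ => ?_
            rw [Finset.sum_ite_mem, Finset.inter_eq_right.2 (hsub i), ← hs i]
        _ = ∑ i, (m i * P) • xs i := by
            refine Finset.sum_congr rfl fun i _ => ?_
            rw [← mul_smul, mul_assoc, hdm i]
    rw [hWsum, hVsum]
    calc ((∑ i, m i) * P) • x = P • ((∑ i, m i) • x) := by rw [mul_comm, mul_smul]
      _ = P • ∑ i, m i • xs i := by rw [hx]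
      _ = ∑ i, P • m i • xs i := Finset.smul_sum
      _ = ∑ i, (m i * P) • xs i := by
          refine Finset.sum_congr rfl fun i _ => ?_
          rw [mul_comm, mul_smul]
theorem subset_comb {X : Type*} [AddCommMonoid X] (A : Set X) : A ⊆ Comb A := by
  intro a ha
  refine ⟨{a}, ⟨a, Finset.mem_singleton_self a⟩, ?_, fun _ => 1, ?_, ?_⟩ <;>
    simp [ha]

/-- The convex hull of a subset of an additive commutative monoid, i.e. the intersection of
all convex sets containing it, is exactly the set of `x` satisfying
`(m₁+⋯+mₙ) • x = m₁ • x₁ + ⋯ + mₙ • xₙ` with `xᵢ ∈ A` and `mᵢ` positive integers. -/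
theorem convexHull_monoid {X : Type*} [AddCommMonoid X] (A : Set X) :
    ⋂₀ {B : Set X | GConvex B ∧ A ⊆ B} =
      {x : X | ∃ (n : ℕ), 0 < n ∧ ∃ (m : Fin n → ℕ) (xs : Fin n → X),
        (∀ i, 0 < m i) ∧ (∀ i, xs i ∈ A) ∧
        (∑ i, m i) • x = ∑ i, m i • xs i} := by
  ext x
  constructor
  · intro hx
    exact comb_to_fin A x (hx (Comb A) ⟨gconvex_comb A, subset_comb A⟩)
  · rintro ⟨n, hn, m, xs, hm, hxs, h⟩ B ⟨hB, hAB⟩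
    exact hB n hn m hm xs (fun i => hAB (hxs i)) x h
end

section
/- Let X be an additive commutative group and let a : X → EReal be both convex and concave (a generalised affine function). Then at least one of the following holds: a is finite (real-valued) at every point of X; a is identically +∞; a is identically −∞; or a attains both the value +∞ and the value −∞. -/
/-- A function from an additive commutative monoid to the extended reals is convex. -/
def EConvexFn {X : Type*} [AddCommMonoid X] (f : X → EReal) : Prop :=
  ∀ (n : ℕ), 0 < n → ∀ m : Fin n → ℕ, (∀ i, 0 < m i) →
    ∀ (xs : Fin n → X) (x : X), (∑ i, m i) • x = ∑ i, m i • xs i →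
      (∑ i, m i) • f x ≤ ∑ i, m i • f (xs i)

/-- A function from an additive commutative monoid to the extended reals is concave. -/
def EConcaveFn {X : Type*} [AddCommMonoid X] (f : X → EReal) : Prop :=
  ∀ (n : ℕ), 0 < n → ∀ m : Fin n → ℕ, (∀ i, 0 < m i) →
    ∀ (xs : Fin n → X) (x : X), (∑ i, m i) • x = ∑ i, m i • xs i →
      ∑ i, m i • f (xs i) ≤ (∑ i, m i) • f x

theorem two_pt_conv {X : Type*} [AddCommGroup X] (a : X → EReal) (hconv : EConvexFn a)
    (x₁ x₂ x : X) (h : x₁ + x₂ = 2 • x) : (2:ℕ) • a x ≤ a x₁ + a x₂ := by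
  have := hconv 2 (by norm_num) (fun _ => 1) (fun _ => one_pos) ![x₁, x₂] x
    (by simp [Fin.sum_univ_two, ← h])
  simpa [Fin.sum_univ_two] using this

theorem two_pt_conc {X : Type*} [AddCommGroup X] (a : X → EReal) (hconc : EConcaveFn a)
    (x₁ x₂ x : X) (h : x₁ + x₂ = 2 • x) : a x₁ + a x₂ ≤ (2:ℕ) • a x := by
  have := hconc 2 (by norm_num) (fun _ => 1) (fun _ => one_pos) ![x₁, x₂] x
    (by simp [Fin.sum_univ_two, ← h])
  simpa [Fin.sum_univ_two] using this

/-- A generalised affine function on an additive commutative group is either everywhere finite,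
identically `+∞`, identically `−∞`, or attains both the values `+∞` and `−∞`. -/
theorem generalizedAffine_dichotomy {X : Type*} [AddCommGroup X] (a : X → EReal)
    (hconv : EConvexFn a) (hconc : EConcaveFn a) :
    (∀ x, ∃ r : ℝ, a x = (r : EReal)) ∨ (∀ x, a x = ⊤) ∨ (∀ x, a x = ⊥) ∨
      ((∃ x, a x = ⊤) ∧ (∃ x, a x = ⊥)) := by
  by_cases htop : ∃ x, a x = ⊤
  · by_cases hbot : ∃ x, a x = ⊥
    · exact Or.inr (Or.inr (Or.inr ⟨htop, hbot⟩))
    · push_neg at hbot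
      obtain ⟨x₀, hx₀⟩ := htop
      refine Or.inr (Or.inl fun y => ?_)
      have h := two_pt_conc a hconc x₀ (2 • y - x₀) y (by abel)
      rw [hx₀] at h
      have h2 : (⊤ : EReal) ≤ (2:ℕ) • a y := by
        refine le_trans (le_of_eq ?_) h
        rw [EReal.top_add_of_ne_bot (hbot _)]
      have : (2:ℕ) • a y = a y + a y := two_nsmul (a y)
      rw [this] at h2
      cases hay : a y with
      | bot => simp [hay] at h2
      | top => rfl
      | coe r => rw [hay, ← EReal.coe_add] at h2; exact absurd (top_le_iff.mp h2) (EReal.coe_ne_top _)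
  · push_neg at htop
    by_cases hbot : ∃ x, a x = ⊥
    · obtain ⟨x₀, hx₀⟩ := hbot
      refine Or.inr (Or.inr (Or.inl fun y => ?_))
      have h := two_pt_conv a hconv x₀ (2 • y - x₀) y (by abel)
      rw [hx₀] at h
      have h2 : (2:ℕ) • a y ≤ ⊥ := by
        refine le_trans h (le_of_eq ?_)
        rw [EReal.bot_add]
      have : (2:ℕ) • a y = a y + a y := two_nsmul (a y)
      rw [this] at h2
      cases hay : a y with
      | bot => rfl
      | top => simp [hay] at h2
      | coe r => rw [hay, ← EReal.coe_add] at h2; exact absurd (le_bot_iff.mp h2) (EReal.coe_ne_bot _)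
    · push_neg at hbot
      refine Or.inl fun x => ?_
      cases hax : a x with
      | bot => exact absurd hax (hbot x)
      | top => exact absurd hax (htop x)
      | coe r => exact ⟨r, rfl⟩
end

section
/- Let X be an additive commutative monoid, Y an additive commutative group with a partial order compatible with addition, and p a prime. Suppose f : X → Y satisfies the convexity inequality for all decompositions whose total weight is a power of p; that is, for every l ≥ 1, every n ≥ 1, all positive integers m₁,…,mₙ with m₁+⋯+mₙ = p^l, and all x, x₁,…,xₙ ∈ X with p^l • x = m₁ • x₁ + ⋯ + mₙ • xₙ, one has p^l • f(x) ≤ m₁ • f(x₁) + ⋯ + mₙ • f(xₙ). Then f is convex, i.e., the inequality holds for all decompositions with arbitrary total weight. -/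
/-!
Any decomposition of total weight `N` can be padded with `x` itself, at weight `M - N`, to a
decomposition of `x` of total weight `M` for any `M > N`; the padding adds `(M - N) • f x` to both
sides of the convexity inequality, and cancels in the group `Y`. Powers of a prime are unbounded,
so every total weight can be padded up to one of them.
-/

/-- A function between additive commutative monoids, whose codomain carries a partial order,
is convex. -/
def ConvexFn {X Y : Type*} [AddCommMonoid X] [AddCommMonoid Y] [PartialOrder Y]
    (f : X → Y) : Prop :=
  ∀ (n : ℕ), 0 < n → ∀ m : Fin n → ℕ, (∀ i, 0 < m i) →
    ∀ (xs : Fin n → X) (x : X), (∑ i, m i) • x = ∑ i, m i • xs i →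
      (∑ i, m i) • f x ≤ ∑ i, m i • f (xs i)

theorem Fin.sum_snoc_smul_snoc {M : Type*} [AddCommMonoid M] {n : ℕ} (m : Fin n → ℕ) (k : ℕ)
    (v : Fin n → M) (y : M) :
    ∑ i, (Fin.snoc m k : Fin (n + 1) → ℕ) i • (Fin.snoc v y : Fin (n + 1) → M) i =
      ∑ i, m i • v i + k • y := by
  simp [Fin.sum_univ_castSucc]

theorem convexFn_of_unbounded_weights {X Y : Type*} [AddCommMonoid X] [AddCommGroup Y]
    [PartialOrder Y] [AddLeftMono Y] (S : Set ℕ) (hS : ∀ N, ∃ M ∈ S, N < M) (f : X → Y)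
    (hf : ∀ n, 0 < n → ∀ m : Fin n → ℕ, (∀ i, 0 < m i) → (∑ i, m i) ∈ S →
      ∀ (xs : Fin n → X) (x : X), (∑ i, m i) • x = ∑ i, m i • xs i →
        (∑ i, m i) • f x ≤ ∑ i, m i • f (xs i)) :
    ConvexFn f := by
  intro n _ m hm xs x hx
  obtain ⟨M, hMS, hNM⟩ := hS (∑ i, m i)
  set k := M - ∑ i, m i
  have hsum : ∑ i, (Fin.snoc m k : Fin (n + 1) → ℕ) i = ∑ i, m i + k := Fin.sum_snoc k m
  have hk : 0 < k := Nat.sub_pos_of_lt hNM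
  have hpos : ∀ i, 0 < (Fin.snoc m k : Fin (n + 1) → ℕ) i :=
    Fin.lastCases (by simpa using hk) (by simpa using hm)
  have hpadded := hf (n + 1) n.succ_pos (Fin.snoc m k) hpos
    (by rwa [hsum, Nat.add_sub_cancel' hNM.le]) (Fin.snoc xs x) x
    (by rw [hsum, Fin.sum_snoc_smul_snoc, add_nsmul, hx])
  have hcomp : f ∘ (Fin.snoc xs x : Fin (n + 1) → X) = Fin.snoc (f ∘ xs) (f x) :=
    Fin.comp_snoc f xs x
  rw [hsum, add_nsmul] at hpadded
  simp only [← Function.comp_apply (f := f), hcomp, Fin.sum_snoc_smul_snoc] at hpadded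
  exact le_of_add_le_add_right hpadded

/-- If the convexity inequality holds for all decompositions whose total weight is a power of a
prime `p`, then it holds for all decompositions, i.e. `f` is convex. -/
theorem convexFn_of_prime_powers {X Y : Type*} [AddCommMonoid X] [AddCommGroup Y]
    [PartialOrder Y] [CovariantClass Y Y (· + ·) (· ≤ ·)]
    (p : ℕ) (hp : p.Prime) (f : X → Y)
    (hf : ∀ (l : ℕ), 0 < l → ∀ (n : ℕ), 0 < n → ∀ m : Fin n → ℕ, (∀ i, 0 < m i) →
      (∑ i, m i) = p ^ l → ∀ (xs : Fin n → X) (x : X),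
        (p ^ l) • x = ∑ i, m i • xs i → (p ^ l) • f x ≤ ∑ i, m i • f (xs i)) :
    ConvexFn f := by
  refine convexFn_of_unbounded_weights (Set.range fun l ↦ p ^ (l + 1))
    (fun N ↦ ⟨p ^ (N + 1), ⟨N, rfl⟩, (N.lt_succ_self).trans (Nat.lt_pow_self hp.one_lt)⟩) f ?_
  rintro n hn m hm ⟨l, hl⟩ xs x
  rw [← hl]
  exact hf (l + 1) l.succ_pos n hn m hm hl.symm xs x
end

section
/- Let X be an additive commutative monoid, Y an additive commutative group with a partial order compatible with addition, and p a prime. If f : X → Y is subadditive and satisfies f(p • x) = p • f(x) for every x ∈ X, then f is convex; moreover f is ℕ-sublinear, i.e., f(m • x) = m • f(x) for every m ∈ ℕ and every x ∈ X. -/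
theorem eq_zero_of_nsmul_eq_self {Y : Type*} [AddCommGroup Y] [PartialOrder Y]
    [IsOrderedAddMonoid Y] {y : Y} {p : ℕ} (hy : 0 ≤ y) (hp : 2 ≤ p) (h : p • y = y) : y = 0 := by
  have : y + y ≤ y := by simpa only [two_nsmul, h] using nsmul_le_nsmul_left hy hp
  exact le_antisymm (add_le_iff_nonpos_left.mp this) hy

theorem map_pow_nsmul_of_map_nsmul {X Y : Type*} [AddMonoid X] [AddMonoid Y] {f : X → Y} {p : ℕ}
    (hhom : ∀ x, f (p • x) = p • f x) (k : ℕ) (x : X) :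
    f (p ^ k • x) = p ^ k • f x := by
  induction k generalizing x with
  | zero => simp
  | succ k ih => rw [pow_succ, mul_nsmul, hhom, ih, ← mul_nsmul]

section OrderedMonoid

variable {X Y : Type*} [AddCommMonoid X] [AddCommMonoid Y] [PartialOrder Y] [IsOrderedAddMonoid Y]
  {f : X → Y}

theorem map_nsmul_le_of_subadditive (h0 : f 0 ≤ 0) (hsub : ∀ x y, f (x + y) ≤ f x + f y)
    (n : ℕ) (x : X) : f (n • x) ≤ n • f x := by
  simpa using Finset.le_sum_of_subadditive f h0 hsub (Finset.range n) fun _ ↦ x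

theorem convexFn_of_subadditive_of_map_nsmul (hsub : ∀ x y, f (x + y) ≤ f x + f y)
    (hhom : ∀ (m : ℕ) (x : X), f (m • x) = m • f x) : ConvexFn f := by
  have h0 : f 0 ≤ 0 := by simpa using (hhom 0 0).le
  intro n _ m _ xs x hx
  calc (∑ i, m i) • f x = f (∑ i, m i • xs i) := by rw [← hx, hhom]
    _ ≤ ∑ i, f (m i • xs i) := Finset.le_sum_of_subadditive f h0 hsub _ _
    _ = ∑ i, m i • f (xs i) := by simp only [hhom]

end OrderedMonoid

section OrderedGroup

variable {X Y : Type*} [AddCommMonoid X] [AddCommGroup Y] [PartialOrder Y] [IsOrderedAddMonoid Y]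
  {f : X → Y}

theorem nsmul_map_le_map_nsmul_of_subadditive (h0 : f 0 ≤ 0)
    (hsub : ∀ x y, f (x + y) ≤ f x + f y) {m N : ℕ} {x : X} (hN : f (N • x) = N • f x)
    (hmN : m ≤ N) : m • f x ≤ f (m • x) := by
  have hsplit : N = m + (N - m) := (Nat.add_sub_of_le hmN).symm
  have key : m • f x + (N - m) • f x ≤ f (m • x) + (N - m) • f x :=
    calc m • f x + (N - m) • f x = f (m • x + (N - m) • x) := by
          rw [← add_nsmul, ← add_nsmul, ← hsplit, hN]
      _ ≤ f (m • x) + f ((N - m) • x) := hsub _ _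
      _ ≤ f (m • x) + (N - m) • f x :=
          add_le_add_right (map_nsmul_le_of_subadditive h0 hsub _ _) _
  exact le_of_add_le_add_right key

theorem map_nsmul_of_subadditive_of_map_nsmul {p : ℕ} (hp : 2 ≤ p)
    (hsub : ∀ x y, f (x + y) ≤ f x + f y) (hhom : ∀ x, f (p • x) = p • f x) (m : ℕ) (x : X) :
    f (m • x) = m • f x := by
  have h0 : f 0 = 0 := by
    refine eq_zero_of_nsmul_eq_self ?_ hp (by simpa using (hhom 0).symm)
    simpa using hsub 0 0
  have hm : m ≤ p ^ m := (Nat.lt_pow_self hp).le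
  exact le_antisymm (map_nsmul_le_of_subadditive h0.le hsub m x)
    (nsmul_map_le_map_nsmul_of_subadditive h0.le hsub (map_pow_nsmul_of_map_nsmul hhom m x) hm)

end OrderedGroup

/-- A subadditive function satisfying `f(p • x) = p • f(x)` for a prime `p` is convex,
and moreover ℕ-sublinear: `f(m • x) = m • f(x)` for all `m ∈ ℕ`. -/
theorem convexFn_of_subadditive_p_homogeneous {X Y : Type*} [AddCommMonoid X] [AddCommGroup Y]
    [PartialOrder Y] [CovariantClass Y Y (· + ·) (· ≤ ·)]
    (p : ℕ) (hp : p.Prime) (f : X → Y)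
    (hsub : ∀ x y, f (x + y) ≤ f x + f y)
    (hhom : ∀ x, f (p • x) = p • f x) :
    ConvexFn f ∧ ∀ (m : ℕ) (x : X), f (m • x) = m • f x := by
  have : IsOrderedAddMonoid Y := { add_le_add_left := fun _ _ h c ↦ add_le_add_left h c }
  have hsmul := map_nsmul_of_subadditive_of_map_nsmul hp.two_le hsub hhom
  exact ⟨convexFn_of_subadditive_of_map_nsmul hsub hsmul, hsmul⟩
end

section
/- Let X be an additive commutative group, f : X → EReal convex, x₀ ∈ X with f(x₀) real, B ⊆ X a symmetric set (−B = B), and M ∈ ℝ such that f(x₀ + u) ≤ f(x₀) + M for every u ∈ B. Then for every integer m ≥ 1 and every y ∈ X with m • y ∈ B, one has f(x₀) − M/m ≤ f(x₀ + y) ≤ f(x₀) + M/m (inequalities in EReal, with the real constants coerced); in particular |f(x₀+y) − f(x₀)| ≤ M/m and f(x₀+y) is real. -/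
lemma my_nsmul_bot (n : ℕ) (h : 1 ≤ n) : n • (⊥ : EReal) = ⊥ := by
  induction n with
  | zero => omega
  | succ k ih =>
    rcases Nat.eq_zero_or_pos k with hk|hk
    · simp [hk]
    · rw [succ_nsmul, ih hk]; simp

lemma my_nsmul_top (n : ℕ) (h : 1 ≤ n) : n • (⊤ : EReal) = ⊤ := by
  induction n with
  | zero => omega
  | succ k ih =>
    rcases Nat.eq_zero_or_pos k with hk|hk
    · simp [hk]
    · rw [succ_nsmul, ih hk]; simp

/-- If a convex `f : X → EReal` is finite at `x₀` and satisfies `f(x₀+u) ≤ f(x₀) + M` on a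
symmetric set `B`, then for every `m ≥ 1` and `y` with `m • y ∈ B` one has
`f(x₀) − M/m ≤ f(x₀+y) ≤ f(x₀) + M/m`; in particular `f(x₀+y)` is real and
`|f(x₀+y) − f(x₀)| ≤ M/m`. -/
theorem convex_local_lipschitz {X : Type*} [AddCommGroup X] (f : X → EReal)
    (hf : EConvexFn f) (x₀ : X) (r₀ : ℝ) (hx₀ : f x₀ = (r₀ : EReal))
    (B : Set X) (hB : -B = B) (M : ℝ)
    (hbound : ∀ u ∈ B, f (x₀ + u) ≤ f x₀ + (M : EReal)) :
    ∀ (m : ℕ), 1 ≤ m → ∀ y : X, m • y ∈ B →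
      (f x₀ - ((M / (m : ℝ) : ℝ) : EReal) ≤ f (x₀ + y) ∧
        f (x₀ + y) ≤ f x₀ + ((M / (m : ℝ) : ℝ) : EReal)) ∧
      ∃ r : ℝ, f (x₀ + y) = (r : EReal) ∧ |r - r₀| ≤ M / (m : ℝ) := by
  intro m hm y hyB
  have hmpos : (0:ℝ) < (m:ℝ) := by positivity
  have hnegB : -(m • y) ∈ B := by rw [← hB, Set.mem_neg, neg_neg]; exact hyB
  have hub : f (x₀ + m • y) ≤ ((r₀ + M : ℝ) : EReal) := by
    have := hbound (m • y) hyB; rwa [hx₀, ← EReal.coe_add] at this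
  have hub' : f (x₀ - m • y) ≤ ((r₀ + M : ℝ) : EReal) := by
    have := hbound (-(m • y)) hnegB
    rwa [hx₀, ← sub_eq_add_neg, ← EReal.coe_add] at this
  -- key upper inequality: m • f (x₀ + y) ≤ m • r₀ + M
  have key_up : m • f (x₀ + y) ≤ ((m • r₀ + M : ℝ) : EReal) := by
    rcases Nat.lt_or_ge m 2 with h2 | h2
    · have hm1 : m = 1 := by omega
      subst hm1
      simp only [one_smul] at hyB ⊢
      have := hbound y hyB; rwa [hx₀, ← EReal.coe_add] at this
    · obtain ⟨k, rfl⟩ : ∃ k, m = 1 + k := ⟨m - 1, by omega⟩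
      have hk1 : 1 ≤ k := by omega
      have h := hf 2 (by norm_num) ![1, k] (by intro i; fin_cases i <;> simp <;> omega)
        ![x₀ + (1 + k) • y, x₀] (x₀ + y) (by
          simp [Fin.sum_univ_two, smul_add, add_smul]
          abel)
      simp only [Fin.sum_univ_two, Matrix.cons_val_zero, Matrix.cons_val_one, Matrix.head_cons,
        one_smul] at h
      calc (1 + k) • f (x₀ + y) ≤ f (x₀ + (1 + k) • y) + k • f x₀ := h
        _ ≤ ((r₀ + M : ℝ) : EReal) + k • ((r₀ : ℝ) : EReal) := by
            rw [hx₀]; exact add_le_add hub le_rfl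
        _ = (((r₀ + M) + k • r₀ : ℝ) : EReal) := by rw [EReal.coe_add (r₀ + M), EReal.coe_nsmul]
        _ = (((1 + k) • r₀ + M : ℝ) : EReal) := by
            congr 1
            simp only [nsmul_eq_mul, add_smul]
            push_cast
            ring
  -- key lower inequality
  have key_low : (((m + 1 : ℕ) • r₀ : ℝ) : EReal) ≤ m • f (x₀ + y) + ((r₀ + M : ℝ) : EReal) := by
    have h := hf 2 (by norm_num) ![m, 1] (by intro i; fin_cases i <;> simp <;> omega)
      ![x₀ + y, x₀ - m • y] x₀ (by
        simp [Fin.sum_univ_two, smul_add, smul_sub, add_smul]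
        try abel)
    simp only [Fin.sum_univ_two, Matrix.cons_val_zero, Matrix.cons_val_one, Matrix.head_cons,
      one_smul] at h
    calc (((m + 1 : ℕ) • r₀ : ℝ) : EReal) = (m + 1 : ℕ) • ((r₀ : ℝ) : EReal) := EReal.coe_nsmul _ _
      _ = (m + 1 : ℕ) • f x₀ := by rw [hx₀]
      _ ≤ m • f (x₀ + y) + f (x₀ - m • y) := h
      _ ≤ m • f (x₀ + y) + ((r₀ + M : ℝ) : EReal) := add_le_add le_rfl hub'
  -- f (x₀ + y) is real
  have hne_top : f (x₀ + y) ≠ ⊤ := by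
    intro h
    rw [h, my_nsmul_top m hm] at key_up
    exact (not_le.mpr (EReal.coe_lt_top _)) key_up
  have hne_bot : f (x₀ + y) ≠ ⊥ := by
    intro h
    rw [h, my_nsmul_bot m hm, EReal.bot_add] at key_low
    exact (not_le.mpr (EReal.bot_lt_coe _)) key_low
  lift f (x₀ + y) to ℝ using ⟨hne_top, hne_bot⟩ with s hs
  rw [← EReal.coe_nsmul] at key_up key_low
  rw [← EReal.coe_add] at key_low
  rw [EReal.coe_le_coe_iff] at key_up key_low
  simp only [nsmul_eq_mul, Nat.cast_add, Nat.cast_one] at key_up key_low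
  have hs_up : s ≤ r₀ + M / m := by
    have h1 : s - r₀ ≤ M / m := by rw [le_div_iff₀ hmpos]; nlinarith
    linarith
  have hs_low : r₀ - M / m ≤ s := by
    have h1 : r₀ - s ≤ M / m := by rw [le_div_iff₀ hmpos]; nlinarith
    linarith
  refine ⟨⟨?_, ?_⟩, s, rfl, ?_⟩
  · rw [hx₀, ← EReal.coe_sub, EReal.coe_le_coe_iff]; exact hs_low
  · rw [hx₀, ← EReal.coe_add, EReal.coe_le_coe_iff]; exact hs_up
  · rw [abs_sub_le_iff]; constructor <;> linarith
end

section
/- Let X be an additive commutative group, p a prime such that the map x ↦ p • x is surjective on X, f : X → ℝ convex, and x ∈ X. For h ∈ X set S(h) = { n * (f(x + g) − f(x)) : n ∈ ℕ, n ≥ 1, g ∈ X, n • g = h } ⊆ ℝ. Then for every h ∈ X the set S(h) is nonempty and bounded below; and the directional derivative f_x(h) := inf S(h) is ℕ-sublinear: f_x(h₁ + h₂) ≤ f_x(h₁) + f_x(h₂) for all h₁, h₂ ∈ X, and f_x(m • h) = m * f_x(h) for every m ∈ ℕ and h ∈ X (in particular f_x(0) = 0). -/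
/-!
Each bound on `f_x` is one instance of convexity. Since `(n + 1) • x = n • (x + g) + (x - h)`,
every element of `S(h)` is at least `f x - f (x - h)`, which vanishes for `h = 0`. Since
`N • (x + u) = n • (x + g) + (N - n) • x` when `N • u = n • g`, refining a division of `h`
(`n < N`) only lowers the quotient `n * (f (x + g) - f x)`; the three-point analogue compares
`S(h₁ + h₂)` with `S(h₁) + S(h₂)`. Semidivisibility makes arbitrarily fine divisions available
(`p ^ n • u = h` with `n < p ^ n`), so every element of `S(h₁) + S(h₂)` dominates one of
`S(h₁ + h₂)`, and `S(m • h)`, which contains `m • S(h)`, has the same infimum as `m • S(h)`.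
-/

open Function Pointwise

/-- A real-valued function on an additive commutative monoid is convex. -/
def RConvexFn {X : Type*} [AddCommMonoid X] (f : X → ℝ) : Prop :=
  ∀ (n : ℕ), 0 < n → ∀ m : Fin n → ℕ, (∀ i, 0 < m i) →
    ∀ (xs : Fin n → X) (x : X), (∑ i, m i) • x = ∑ i, m i • xs i →
      ((∑ i, m i : ℕ) : ℝ) * f x ≤ ∑ i, (m i : ℝ) * f (xs i)

/-- The set `S(h) = { n * (f(x+g) − f(x)) : n ≥ 1, n • g = h }`. -/
def dirSet {X : Type*} [AddCommGroup X] (f : X → ℝ) (x h : X) : Set ℝ :=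
  {r : ℝ | ∃ (n : ℕ) (g : X), 1 ≤ n ∧ n • g = h ∧ r = (n : ℝ) * (f (x + g) - f x)}

/-- The directional derivative `f_x(h) = inf S(h)`. -/
noncomputable def dirDeriv {X : Type*} [AddCommGroup X] (f : X → ℝ) (x h : X) : ℝ :=
  sInf (dirSet f x h)

theorem exists_lt_nsmul_eq {X : Type*} [AddMonoid X] {p : ℕ} (hp : 1 < p)
    (hdiv : Surjective fun x : X => p • x) (n : ℕ) (h : X) :
    ∃ N : ℕ, n < N ∧ ∃ g : X, N • g = h := by
  obtain ⟨g, hg⟩ := hdiv.iterate n h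
  exact ⟨p ^ n, Nat.lt_pow_self hp, g, by rwa [smul_iterate] at hg⟩

section

variable {X : Type*} [AddCommGroup X]

theorem dirSet_nonempty (f : X → ℝ) (x h : X) : (dirSet f x h).Nonempty :=
  ⟨_, 1, h, le_rfl, one_nsmul h, rfl⟩

theorem smul_dirSet_subset {m : ℕ} (hm : 0 < m) (f : X → ℝ) (x h : X) :
    (m : ℝ) • dirSet f x h ⊆ dirSet f x (m • h) := by
  rintro _ ⟨_, ⟨n, g, hn, rfl, rfl⟩, rfl⟩
  exact ⟨m * n, g, Nat.mul_pos hm hn, mul_smul m n g, by push_cast; ring⟩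

end

namespace RConvexFn

section

variable {M : Type*} [AddCommMonoid M] {f : M → ℝ}

theorem two_point (hf : RConvexFn f) {a b : ℕ} (ha : 0 < a) (hb : 0 < b) {w y z : M}
    (h : (a + b) • w = a • y + b • z) :
    ((a : ℝ) + b) * f w ≤ a * f y + b * f z := by
  simpa [Fin.sum_univ_two] using hf 2 two_pos ![a, b] (fun i => by fin_cases i <;> assumption)
    ![y, z] w (by simpa [Fin.sum_univ_two] using h)

theorem three_point (hf : RConvexFn f) {a b c : ℕ} (ha : 0 < a) (hb : 0 < b) (hc : 0 < c)
    {w y z u : M} (h : (a + b + c) • w = a • y + b • z + c • u) :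
    ((a : ℝ) + b + c) * f w ≤ a * f y + b * f z + c * f u := by
  simpa [Fin.sum_univ_three] using hf 3 three_pos ![a, b, c]
    (fun i => by fin_cases i <;> assumption) ![y, z, u] w (by simpa [Fin.sum_univ_three] using h)

end

variable {X : Type*} [AddCommGroup X] {f : X → ℝ}

theorem sub_le_mul_sub (hf : RConvexFn f) {n : ℕ} (hn : 0 < n) {g h : X} (hg : n • g = h)
    (x : X) : f x - f (x - h) ≤ n * (f (x + g) - f x) := by
  have := hf.two_point hn one_pos (w := x) (y := x + g) (z := x - h)
    (by rw [smul_add, hg, add_smul]; abel)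
  push_cast at this
  linarith

theorem mul_sub_le_mul_sub (hf : RConvexFn f) {n N : ℕ} (hn : 0 < n) (hnN : n < N) {g u : X}
    (hu : N • u = n • g) (x : X) :
    (N : ℝ) * (f (x + u) - f x) ≤ n * (f (x + g) - f x) := by
  obtain ⟨c, rfl⟩ := Nat.exists_eq_add_of_lt hnN
  have := hf.two_point hn c.add_one_pos (w := x + u) (y := x + g) (z := x)
    (by rw [← add_assoc, smul_add, hu, smul_add]; simp only [add_smul, one_smul]; abel)
  push_cast at this ⊢
  linarith

theorem mul_sub_le_add (hf : RConvexFn f) {n₁ n₂ N : ℕ} (hn₁ : 0 < n₁) (hn₂ : 0 < n₂)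
    (hN : n₁ + n₂ < N) {g₁ g₂ u : X} (hu : N • u = n₁ • g₁ + n₂ • g₂) (x : X) :
    (N : ℝ) * (f (x + u) - f x) ≤ n₁ * (f (x + g₁) - f x) + n₂ * (f (x + g₂) - f x) := by
  obtain ⟨c, rfl⟩ := Nat.exists_eq_add_of_lt hN
  have := hf.three_point hn₁ hn₂ c.add_one_pos (w := x + u) (y := x + g₁) (z := x + g₂) (u := x)
    (by rw [← add_assoc, smul_add, hu, smul_add, smul_add]; simp only [add_smul, one_smul]; abel)
  push_cast at this ⊢
  linarith

theorem sub_le_of_mem_dirSet (hf : RConvexFn f) {x h : X} {r : ℝ} (hr : r ∈ dirSet f x h) :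
    f x - f (x - h) ≤ r := by
  obtain ⟨n, g, hn, hg, rfl⟩ := hr
  exact hf.sub_le_mul_sub hn hg x

theorem bddBelow_dirSet (hf : RConvexFn f) (x h : X) : BddBelow (dirSet f x h) :=
  ⟨_, fun _ => hf.sub_le_of_mem_dirSet⟩

theorem dirDeriv_zero (hf : RConvexFn f) (x : X) : dirDeriv f x 0 = 0 :=
  le_antisymm (csInf_le (hf.bddBelow_dirSet x 0) ⟨1, 0, le_rfl, smul_zero 1, by simp⟩)
    (le_csInf (dirSet_nonempty f x 0) fun _ hr => by simpa using hf.sub_le_of_mem_dirSet hr)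

variable {p : ℕ} (hp : 1 < p) (hdiv : Surjective fun x : X => p • x)
include hp hdiv

theorem exists_mem_dirSet_add_le (hf : RConvexFn f) {x h₁ h₂ : X} {r₁ r₂ : ℝ}
    (hr₁ : r₁ ∈ dirSet f x h₁) (hr₂ : r₂ ∈ dirSet f x h₂) :
    ∃ r ∈ dirSet f x (h₁ + h₂), r ≤ r₁ + r₂ := by
  obtain ⟨n₁, g₁, hn₁, rfl, rfl⟩ := hr₁
  obtain ⟨n₂, g₂, hn₂, rfl, rfl⟩ := hr₂
  obtain ⟨N, hN, u, hu⟩ := exists_lt_nsmul_eq hp hdiv (n₁ + n₂) (n₁ • g₁ + n₂ • g₂)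
  exact ⟨_, ⟨N, u, by omega, hu, rfl⟩, hf.mul_sub_le_add hn₁ hn₂ hN hu x⟩

theorem exists_mem_dirSet_mul_le (hf : RConvexFn f) {x h : X} {m : ℕ} (hm : 0 < m) {s : ℝ}
    (hs : s ∈ dirSet f x (m • h)) : ∃ t ∈ dirSet f x h, m * t ≤ s := by
  obtain ⟨n, g, hn, hg, rfl⟩ := hs
  obtain ⟨N, hN, u, rfl⟩ := exists_lt_nsmul_eq hp hdiv n h
  refine ⟨_, ⟨N, u, by omega, rfl, rfl⟩, ?_⟩
  have := hf.mul_sub_le_mul_sub hn (hN.trans_le (Nat.le_mul_of_pos_left N hm))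
    (by rw [hg, mul_smul]) x
  push_cast at this
  rwa [← mul_assoc]

theorem dirDeriv_add_le (hf : RConvexFn f) (x h₁ h₂ : X) :
    dirDeriv f x (h₁ + h₂) ≤ dirDeriv f x h₁ + dirDeriv f x h₂ := by
  rw [dirDeriv, dirDeriv, dirDeriv, ← csInf_add (dirSet_nonempty f x h₁)
    (hf.bddBelow_dirSet x h₁) (dirSet_nonempty f x h₂) (hf.bddBelow_dirSet x h₂)]
  refine le_csInf ((dirSet_nonempty f x h₁).add (dirSet_nonempty f x h₂)) ?_
  rintro _ ⟨r₁, hr₁, r₂, hr₂, rfl⟩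
  obtain ⟨r, hr, hle⟩ := hf.exists_mem_dirSet_add_le hp hdiv hr₁ hr₂
  exact (csInf_le (hf.bddBelow_dirSet x _) hr).trans hle

theorem dirDeriv_nsmul (hf : RConvexFn f) (x : X) (m : ℕ) (h : X) :
    dirDeriv f x (m • h) = m * dirDeriv f x h := by
  rcases m.eq_zero_or_pos with rfl | hm
  · simp [hf.dirDeriv_zero]
  rw [dirDeriv, dirDeriv, ← smul_eq_mul, ← Real.sInf_smul_of_nonneg (Nat.cast_nonneg m)]
  refine csInf_eq_csInf_of_forall_exists_le (fun s hs => ?_)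
    fun t ht => ⟨t, smul_dirSet_subset hm f x h ht, le_rfl⟩
  obtain ⟨t, ht, hle⟩ := hf.exists_mem_dirSet_mul_le hp hdiv hm hs
  exact ⟨_, Set.smul_mem_smul_set ht, hle⟩

end RConvexFn

/-- For a convex real-valued function on a `p`-semidivisible group, each set `S(h)` is nonempty
and bounded below, and the directional derivative `f_x` is ℕ-sublinear: subadditive,
positively homogeneous over ℕ, and `f_x(0) = 0`. -/
theorem dirDeriv_nsublinear {X : Type*} [AddCommGroup X] (p : ℕ) (hp : p.Prime)
    (hdiv : Function.Surjective fun x : X => p • x)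
    (f : X → ℝ) (hf : RConvexFn f) (x : X) :
    (∀ h : X, (dirSet f x h).Nonempty ∧ BddBelow (dirSet f x h)) ∧
    (∀ h₁ h₂ : X, dirDeriv f x (h₁ + h₂) ≤ dirDeriv f x h₁ + dirDeriv f x h₂) ∧
    (∀ (m : ℕ) (h : X), dirDeriv f x (m • h) = (m : ℝ) * dirDeriv f x h) ∧
    dirDeriv f x 0 = 0 :=
  ⟨fun h => ⟨dirSet_nonempty f x h, hf.bddBelow_dirSet x h⟩,
    hf.dirDeriv_add_le hp.one_lt hdiv x, hf.dirDeriv_nsmul hp.one_lt hdiv x, hf.dirDeriv_zero x⟩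
end

section
/- (Weak and strong Fenchel duality) Let X₁, X₂ be additive commutative groups, T : X₁ → X₂ additive, and f : X₁ → ℝ, g : X₂ → ℝ. Define in EReal: P = inf_{x ∈ X₁} (f(x) + g(T x)) and D = sup over additive φ : X₂ → ℝ of (− f⋆(φ ∘ T) − g⋆(−φ)), where f⋆(ψ) = sup_x (ψ(x) − f(x)) ∈ EReal. Then D ≤ P (weak duality). If moreover X₁ is semidivisible and f, g are convex, then P = D, and whenever P is real, the supremum defining D is attained by some additive φ : X₂ → ℝ. -/
noncomputable def fenchelConj {X : Type*} (f : X → ℝ) (ψ : X → ℝ) : EReal :=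
  ⨆ x : X, ((ψ x - f x : ℝ) : EReal)

open Function Finsupp

section SubadditiveExtension

variable {G : Type*} [AddCommGroup G] {p : G → ℝ}

theorem nsmul_le_of_subadditive (h0 : p 0 ≤ 0) (hp : ∀ a b, p (a + b) ≤ p a + p b)
    (n : ℕ) (a : G) : p (n • a) ≤ n * p a := by
  induction n with
  | zero => simpa using h0
  | succ n ih =>
    rw [succ_nsmul]
    push_cast
    linarith [hp (n • a) a]

theorem mul_sub_le_mul_sub_of_subadditive (h0 : p 0 ≤ 0) (hp : ∀ a b, p (a + b) ≤ p a + p b)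
    {Γ : AddSubgroup (G × ℝ)} (hΓ : ∀ q ∈ Γ, q.2 ≤ p q.1) {q q' : G × ℝ} (hq : q ∈ Γ)
    (hq' : q' ∈ Γ) (z : G) (m n : ℕ) :
    n * (q.2 - p (q.1 - m • z)) ≤ m * (p (q'.1 + n • z) - q'.2) := by
  have hmem : (n • q + m • q').2 ≤ p (n • q + m • q').1 :=
    hΓ _ (add_mem (nsmul_mem hq n) (nsmul_mem hq' m))
  have hsplit : (n • q + m • q').1 = n • (q.1 - m • z) + m • (q'.1 + n • z) := by
    simp only [Prod.fst_add, Prod.smul_fst, smul_sub, smul_add, smul_smul, mul_comm m n]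
    abel
  rw [hsplit] at hmem
  have := (hp _ _).trans (add_le_add (nsmul_le_of_subadditive h0 hp n (q.1 - m • z))
    (nsmul_le_of_subadditive h0 hp m (q'.1 + n • z)))
  simp only [Prod.snd_add, Prod.smul_snd, nsmul_eq_mul] at hmem
  linarith

theorem exists_forall_mem_sup_zmultiples_le (h0 : p 0 ≤ 0)
    (hp : ∀ a b, p (a + b) ≤ p a + p b) {Γ : AddSubgroup (G × ℝ)} (hΓ : ∀ q ∈ Γ, q.2 ≤ p q.1)
    (z : G) : ∃ c : ℝ, ∀ q ∈ Γ ⊔ AddSubgroup.zmultiples (z, c), q.2 ≤ p q.1 := by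
  -- `c` has to lie between every `(q.2 - p (q.1 - m • z)) / m` and every
  -- `(p (q'.1 + n • z) - q'.2) / n`; the sup of the former will do.
  set L : Set ℝ := {t | ∃ q ∈ Γ, ∃ m : ℕ, 0 < m ∧ t = (q.2 - p (q.1 - m • z)) / m}
  have hupper : ∀ q' ∈ Γ, ∀ n : ℕ, 0 < n → ∀ t ∈ L, t ≤ (p (q'.1 + n • z) - q'.2) / n := by
    rintro q' hq' n hn t ⟨q, hq, m, hm, rfl⟩
    rw [div_le_div_iff₀ (by positivity) (by positivity)]
    linarith [mul_sub_le_mul_sub_of_subadditive h0 hp hΓ hq hq' z m n]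
  have hL : L.Nonempty := ⟨_, 0, zero_mem Γ, 1, one_pos, rfl⟩
  have hbdd : BddAbove L := ⟨_, hupper 0 (zero_mem Γ) 1 one_pos⟩
  have hbounds : ∀ q ∈ Γ, ∀ n : ℕ,
      q.2 + n * sSup L ≤ p (q.1 + n • z) ∧ q.2 - n * sSup L ≤ p (q.1 - n • z) := by
    intro q hq n
    rcases n.eq_zero_or_pos with rfl | hn
    · simpa using hΓ q hq
    constructor
    · have := csSup_le hL (hupper q hq n hn)
      rw [le_div_iff₀ (by positivity)] at this
      linarith
    · have := le_csSup hbdd ⟨q, hq, n, hn, rfl⟩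
      rw [div_le_iff₀ (by positivity)] at this
      linarith
  refine ⟨sSup L, fun q hq => ?_⟩
  obtain ⟨a, ha, _, ⟨k, rfl⟩, rfl⟩ := AddSubgroup.mem_sup.mp hq
  obtain ⟨n, rfl | rfl⟩ := Int.eq_nat_or_neg k
  · simpa [sub_eq_add_neg] using (hbounds a ha n).1
  · simpa [sub_eq_add_neg] using (hbounds a ha n).2

theorem exists_addMonoidHom_le_of_subadditive (h0 : p 0 ≤ 0)
    (hp : ∀ a b, p (a + b) ≤ p a + p b) : ∃ ψ : G →+ ℝ, ∀ z, ψ z ≤ p z := by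
  set S : Set (AddSubgroup (G × ℝ)) := {Γ | ∀ q ∈ Γ, q.2 ≤ p q.1}
  have hbot : ⊥ ∈ S := by
    rintro q hq
    simpa [AddSubgroup.mem_bot.mp hq] using hp 0 0
  obtain ⟨Γ, -, hΓ, hmax⟩ := zorn_le_nonempty₀ S (fun c hcS hchain Γ hΓ => by
    refine ⟨sSup c, fun q hq => ?_, fun _ => le_sSup⟩
    obtain ⟨Γ', hΓ'c, hqΓ'⟩ := (AddSubgroup.mem_sSup_of_directedOn ⟨Γ, hΓ⟩ hchain.directedOn).mp hq
    exact hcS hΓ'c q hqΓ') ⊥ hbot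
  have hunique : ∀ z t t', (z, t) ∈ Γ → (z, t') ∈ Γ → t = t' := by
    intro z t t' h h'
    have h₁ := hΓ _ (sub_mem h h')
    have h₂ := hΓ _ (sub_mem h' h)
    simp only [Prod.mk_sub_mk, sub_self] at h₁ h₂
    linarith
  have htotal : ∀ z, ∃ t, (z, t) ∈ Γ := by
    intro z
    obtain ⟨c, hc⟩ := exists_forall_mem_sup_zmultiples_le h0 hp hΓ z
    exact ⟨c, hmax hc le_sup_left (AddSubgroup.mem_sup_right (AddSubgroup.mem_zmultiples _))⟩
  choose ψ hψ using htotal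
  refine ⟨AddMonoidHom.mk' ψ fun a b => hunique _ _ _ (hψ (a + b)) ?_, fun z => hΓ _ (hψ z)⟩
  simpa using add_mem (hψ a) (hψ b)

theorem exists_addMonoidHom_le_of_linearCombination_nonneg {ι : Type*} (h : ι → G) (c : ι → ℝ)
    (hh : Surjective h)
    (hc : ∀ K : ι →₀ ℕ, linearCombination ℕ h K = 0 → 0 ≤ linearCombination ℕ c K) :
    ∃ ψ : G →+ ℝ, ∀ i, ψ (h i) ≤ c i := by
  set cost : G → Set ℝ := fun z => linearCombination ℕ c '' {K | linearCombination ℕ h K = z}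
  have hne : ∀ z, (cost z).Nonempty := fun z => by
    obtain ⟨i, rfl⟩ := hh z
    exact ⟨_, single i 1, by simp, rfl⟩
  have hbdd : ∀ z, BddBelow (cost z) := fun z => by
    obtain ⟨j, hj⟩ := hh (-z)
    refine ⟨-c j, ?_⟩
    rintro _ ⟨K, hK, rfl⟩
    have := hc (K + single j 1) (by simp [hK.out, hj])
    simp only [map_add, linearCombination_single, one_smul] at this
    linarith
  have hsingle : ∀ i, sInf (cost (h i)) ≤ c i := fun i =>
    csInf_le (hbdd _) ⟨single i 1, by simp, by simp⟩
  refine (exists_addMonoidHom_le_of_subadditive (p := fun z => sInf (cost z)) ?_ ?_).imp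
    fun ψ hψ i => (hψ (h i)).trans (hsingle i)
  · exact csInf_le (hbdd 0) ⟨0, map_zero _, map_zero _⟩
  · intro a b
    have hadd : ∀ s ∈ cost a, ∀ t ∈ cost b, sInf (cost (a + b)) ≤ s + t := by
      rintro _ ⟨K₁, hK₁, rfl⟩ _ ⟨K₂, hK₂, rfl⟩
      exact csInf_le (hbdd _) ⟨K₁ + K₂, by simp [hK₁.out, hK₂.out], map_add _ _ _⟩
    have := le_csInf (hne a) fun s hs =>
      sub_le_comm.mp (le_csInf (hne b) fun t ht => sub_le_iff_le_add'.mpr (hadd s hs t ht))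
    linarith

end SubadditiveExtension

theorem RConvexFn.degree_mul_le {X ι : Type*} [AddCommMonoid X] {f : X → ℝ} (hf : RConvexFn f)
    (K : ι →₀ ℕ) (xs : ι → X) (x : X) (h : K.degree • x = linearCombination ℕ xs K) :
    (K.degree : ℝ) * f x ≤ linearCombination ℕ (f ∘ xs) K := by
  rcases eq_or_ne K 0 with rfl | hK
  · simp
  set e := K.support.equivFin.symm
  have hn : 0 < K.support.card := Finset.card_pos.mpr (support_nonempty_iff.mpr hK)
  simp only [degree_apply, linearCombination_apply, Finsupp.sum, comp_apply, nsmul_eq_mul,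
    ← Finset.sum_coe_sort K.support, ← e.sum_comp] at h ⊢
  exact_mod_cast hf _ hn _ (fun j => Nat.pos_of_ne_zero (mem_support_iff.mp (e j).2)) _ x h

theorem exists_lt_surjective_nsmul {X : Type*} [AddMonoid X] {p : ℕ} (hp : 1 < p)
    (hsurj : Surjective fun x : X => p • x) (S : ℕ) :
    ∃ N : ℕ, S < N ∧ Surjective fun x : X => N • x :=
  ⟨p ^ S, Nat.lt_pow_self hp, by simpa only [smul_iterate] using hsurj.iterate S⟩

section Perturbation

variable {X₁ X₂ : Type*} [AddCommGroup X₁] [AddCommGroup X₂] (T : X₁ →+ X₂) {f : X₁ → ℝ}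
  {g : X₂ → ℝ}

theorem degree_mul_le_linearCombination (hf : RConvexFn f) (hg : RConvexFn g)
    (K : X₁ × X₂ →₀ ℕ) (hK : linearCombination ℕ Prod.snd K = 0) (x : X₁)
    (hx : K.degree • x = linearCombination ℕ Prod.fst K) :
    (K.degree : ℝ) * (f x + g (T x)) ≤
      linearCombination ℕ (fun i => f i.1 + g (T i.1 + i.2)) K := by
  have hTx : K.degree • T x = linearCombination ℕ (fun i => T i.1 + i.2) K := by
    rw [← map_nsmul, hx]
    simp only [linearCombination_apply] at hK ⊢
    simp only [map_finsuppSum, map_nsmul, smul_add, Finsupp.sum_add, hK, add_zero]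
  have := add_le_add (hf.degree_mul_le K Prod.fst x hx) (hg.degree_mul_le K _ (T x) hTx)
  simpa only [linearCombination_apply, comp_apply, smul_add, Finsupp.sum_add, mul_add] using this

theorem linearCombination_nonneg_of_isGLB
    (hdiv : ∃ p : ℕ, p.Prime ∧ Surjective fun x : X₁ => p • x) (hf : RConvexFn f)
    (hg : RConvexFn g) {r : ℝ} (hr : IsGLB (Set.range fun x => f x + g (T x)) r)
    (K : X₁ × X₂ →₀ ℕ) (hK : linearCombination ℕ Prod.snd K = 0) :
    0 ≤ linearCombination ℕ (fun i => f i.1 + g (T i.1 + i.2) - r) K := by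
  suffices (K.degree : ℝ) * r ≤ linearCombination ℕ (fun i => f i.1 + g (T i.1 + i.2)) K by
    simpa [linearCombination_apply, smul_sub, Finsupp.sum_sub, degree_apply, Finsupp.sum,
      Finset.sum_mul] using this
  -- Pad `K` with `M` copies of a near-minimiser `x₀`, making the total weight `N` one by which
  -- `X₁` is divisible.
  obtain ⟨p, hp, hdiv⟩ := hdiv
  obtain ⟨N, hN, hsurj⟩ := exists_lt_surjective_nsmul hp.one_lt hdiv K.degree
  obtain ⟨M, hM, rfl⟩ : ∃ M, 0 < M ∧ N = K.degree + M := ⟨N - K.degree, by omega, by omega⟩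
  refine le_of_forall_pos_le_add fun ε hε => ?_
  obtain ⟨_, ⟨x₀, rfl⟩, -, hx₀⟩ :=
    hr.exists_between (lt_add_of_pos_right r (div_pos hε (Nat.cast_pos.mpr hM)))
  set K' := K + single (x₀, 0) M
  obtain ⟨x, hx⟩ := hsurj (linearCombination ℕ Prod.fst K')
  have key := degree_mul_le_linearCombination T hf hg K' (by simp [K', hK]) x
    (by simpa [K'] using hx)
  simp only [K', map_add, degree_single, linearCombination_single, add_zero,
    nsmul_eq_mul] at key
  have hlow : r ≤ f x + g (T x) := hr.1 (Set.mem_range_self x)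
  have hM' : (M : ℝ) * (ε / M) = ε := mul_div_cancel₀ ε (Nat.cast_ne_zero.mpr hM.ne')
  push_cast at key
  simp only at hx₀
  linarith [mul_le_mul_of_nonneg_left hlow (by positivity : (0 : ℝ) ≤ K.degree + M),
    mul_lt_mul_of_pos_left hx₀ (Nat.cast_pos.mpr hM : (0 : ℝ) < M)]

theorem exists_addMonoidHom_le_of_isGLB
    (hdiv : ∃ p : ℕ, p.Prime ∧ Surjective fun x : X₁ => p • x) (hf : RConvexFn f)
    (hg : RConvexFn g) {r : ℝ} (hr : IsGLB (Set.range fun x => f x + g (T x)) r) :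
    ∃ ψ : X₂ →+ ℝ, ∀ x w, ψ w ≤ f x + g (T x + w) - r :=
  (exists_addMonoidHom_le_of_linearCombination_nonneg Prod.snd _ Prod.snd_surjective
    (linearCombination_nonneg_of_isGLB T hdiv hf hg hr)).imp fun _ hψ x w => hψ (x, w)

end Perturbation

section Conjugate

variable {X Y : Type*} (f : X → ℝ) (g : Y → ℝ) (ψ : X → ℝ) (χ : Y → ℝ)

theorem le_fenchelConj (x : X) : ((ψ x - f x : ℝ) : EReal) ≤ fenchelConj f ψ :=
  le_iSup (fun x => ((ψ x - f x : ℝ) : EReal)) x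

theorem neg_fenchelConj_sub_fenchelConj_le {x : X} {y : Y} (h : ψ x + χ y = 0) :
    -fenchelConj f ψ - fenchelConj g χ ≤ ((f x + g y : ℝ) : EReal) :=
  calc -fenchelConj f ψ - fenchelConj g χ
      ≤ -((ψ x - f x : ℝ) : EReal) - ((χ y - g y : ℝ) : EReal) :=
        EReal.sub_le_sub (EReal.neg_le_neg_iff.mpr (le_fenchelConj f ψ x)) (le_fenchelConj g χ y)
    _ = ((f x + g y : ℝ) : EReal) := by
        rw [← EReal.coe_neg, ← EReal.coe_sub]
        congr 1
        linarith

theorem fenchelConj_ne_bot [Nonempty X] : fenchelConj f ψ ≠ ⊥ :=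
  ne_bot_of_le_ne_bot (EReal.coe_ne_bot _) (le_fenchelConj f ψ (Classical.arbitrary X))

theorem coe_le_neg_fenchelConj_sub_fenchelConj [Nonempty X] [Nonempty Y] {r : ℝ}
    (h : ∀ x y, ψ x - f x + (χ y - g y) ≤ -r) :
    (r : EReal) ≤ -fenchelConj f ψ - fenchelConj g χ := by
  rw [← EReal.neg_add (Or.inl (fenchelConj_ne_bot f ψ)) (Or.inr (fenchelConj_ne_bot g χ)),
    EReal.le_neg]
  refine EReal.add_le_of_forall_lt fun a ha b hb => ?_
  obtain ⟨x, hx⟩ := lt_iSup_iff.mp ha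
  obtain ⟨y, hy⟩ := lt_iSup_iff.mp hb
  calc a + b ≤ ((ψ x - f x + (χ y - g y) : ℝ) : EReal) := by
        rw [EReal.coe_add]
        exact add_le_add hx.le hy.le
    _ ≤ -r := by exact_mod_cast h x y

end Conjugate

theorem isGLB_range_of_iInf_eq_coe {ι : Type*} {u : ι → ℝ} {r : ℝ}
    (h : ⨅ i, (u i : EReal) = r) : IsGLB (Set.range u) r := by
  refine ⟨?_, fun b hb => ?_⟩
  · rintro _ ⟨i, rfl⟩
    exact EReal.coe_le_coe_iff.mp (h ▸ iInf_le _ i)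
  · exact EReal.coe_le_coe_iff.mp (h ▸ le_iInf fun i => EReal.coe_le_coe_iff.mpr (hb ⟨i, rfl⟩))

theorem exists_addMonoidHom_coe_le_neg_fenchelConj_sub {X₁ X₂ : Type*} [AddCommGroup X₁]
    [AddCommGroup X₂] (T : X₁ →+ X₂) {f : X₁ → ℝ} {g : X₂ → ℝ}
    (hdiv : ∃ p : ℕ, p.Prime ∧ Surjective fun x : X₁ => p • x) (hf : RConvexFn f)
    (hg : RConvexFn g) {r : ℝ} (hr : IsGLB (Set.range fun x => f x + g (T x)) r) :
    ∃ φ : X₂ →+ ℝ,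
      (r : EReal) ≤ -fenchelConj f (fun x => φ (T x)) - fenchelConj g (fun z => -φ z) := by
  obtain ⟨ψ, hψ⟩ := exists_addMonoidHom_le_of_isGLB T hdiv hf hg hr
  refine ⟨-ψ, coe_le_neg_fenchelConj_sub_fenchelConj f g _ _ fun x z => ?_⟩
  have := hψ x (z - T x)
  simp only [AddMonoidHom.neg_apply, neg_neg, map_sub, add_sub_cancel] at this ⊢
  linarith

/-- Weak and strong Fenchel duality: with
`P = inf_x (f(x) + g(Tx))` and `D = sup_{φ additive} (−f⋆(φ∘T) − g⋆(−φ))` in the extended reals,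
one always has `D ≤ P`; if moreover `X₁` is semidivisible and `f, g` are convex then `P = D`,
and the supremum defining `D` is attained whenever `P` is real. -/
theorem fenchel_duality {X₁ X₂ : Type*} [AddCommGroup X₁] [AddCommGroup X₂]
    (T : X₁ → X₂) (hT : ∀ x y, T (x + y) = T x + T y) (f : X₁ → ℝ) (g : X₂ → ℝ) :
    sSup {d : EReal | ∃ φ : X₂ → ℝ, (∀ x y, φ (x + y) = φ x + φ y) ∧
        d = -fenchelConj f (fun x => φ (T x)) - fenchelConj g (fun x => -φ x)} ≤
      ⨅ x : X₁, ((f x + g (T x) : ℝ) : EReal) ∧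
    ((∃ p : ℕ, p.Prime ∧ Function.Surjective fun x : X₁ => p • x) →
      RConvexFn f → RConvexFn g →
      (⨅ x : X₁, ((f x + g (T x) : ℝ) : EReal)) =
        sSup {d : EReal | ∃ φ : X₂ → ℝ, (∀ x y, φ (x + y) = φ x + φ y) ∧
          d = -fenchelConj f (fun x => φ (T x)) - fenchelConj g (fun x => -φ x)} ∧
      ∀ r : ℝ, (⨅ x : X₁, ((f x + g (T x) : ℝ) : EReal)) = (r : EReal) →
        ∃ φ : X₂ → ℝ, (∀ x y, φ (x + y) = φ x + φ y) ∧
          -fenchelConj f (fun x => φ (T x)) - fenchelConj g (fun x => -φ x) =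
            ⨅ x : X₁, ((f x + g (T x) : ℝ) : EReal)) := by
  set P := ⨅ x : X₁, ((f x + g (T x) : ℝ) : EReal)
  set D := sSup {d : EReal | ∃ φ : X₂ → ℝ, (∀ x y, φ (x + y) = φ x + φ y) ∧
    d = -fenchelConj f (fun x => φ (T x)) - fenchelConj g (fun x => -φ x)}
  have weak (φ : X₂ → ℝ) :
      -fenchelConj f (fun x => φ (T x)) - fenchelConj g (fun x => -φ x) ≤ P :=
    le_iInf fun x => neg_fenchelConj_sub_fenchelConj_le f g (fun x => φ (T x)) (fun x => -φ x)
      (add_neg_cancel (φ (T x)))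
  have hDP : D ≤ P := sSup_le (by rintro _ ⟨φ, -, rfl⟩; exact weak φ)
  refine ⟨hDP, fun hdiv hf hg => ?_⟩
  have attain (r : ℝ) (hr : P = r) : ∃ φ : X₂ → ℝ, (∀ x y, φ (x + y) = φ x + φ y) ∧
      -fenchelConj f (fun x => φ (T x)) - fenchelConj g (fun x => -φ x) = P := by
    obtain ⟨φ, hφ⟩ := exists_addMonoidHom_coe_le_neg_fenchelConj_sub (AddMonoidHom.mk' T hT)
      hdiv hf hg (isGLB_range_of_iInf_eq_coe hr)
    exact ⟨φ, map_add φ, le_antisymm (weak φ) (hr ▸ hφ)⟩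
  refine ⟨?_, attain⟩
  have hPtop : P ≠ ⊤ := ne_top_of_le_ne_top (EReal.coe_ne_top _) (iInf_le _ 0)
  by_cases hPbot : P = ⊥
  · exact le_antisymm (hPbot ▸ bot_le) hDP
  obtain ⟨φ, hφ, hφP⟩ := attain P.toReal (EReal.coe_toReal hPtop hPbot).symm
  exact le_antisymm (hφP ▸ le_sSup ⟨φ, hφ, rfl⟩) hDP
end

section
/- (Hahn–Banach theorem for groups) Let X be an additive commutative group, X' ⊆ X a subgroup, f : X → ℝ an ℕ-sublinear function, and h : X' → ℝ an additive function with h(x) ≤ f(x) for all x ∈ X'. Then there exists an additive function h̄ : X → ℝ such that h̄(x) = h(x) for all x ∈ X' and h̄(x) ≤ f(x) for all x ∈ X. -/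
/-!
Zorn's lemma applied to `f`-dominated partial `ℤ`-linear maps reduces the theorem to extending a
dominated `g` from a subgroup `D` to `D + ℤx`. The value `c` at `x` must satisfy
`(g z - f (z - m • x)) / m ≤ c ≤ (f (y + n • x) - g y) / n` for all `y, z ∈ D` and `m, n > 0`, and
such a `c` exists because `n • z + m • y = n • (z - m • x) + m • (y + n • x)`. No compatibility
has to be checked when `D` meets `ℤx`: an additive map dominated by `f` vanishes wherever its
argument does, since `f 0 = 0` and domination also applies to the negative.
-/

open LinearMap Submodule

structure NatSublinear {X : Type*} [AddMonoid X] (f : X → ℝ) : Prop where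
  add_le : ∀ x y, f (x + y) ≤ f x + f y
  nsmul_eq : ∀ (m : ℕ) (x : X), f (m • x) = m * f x

theorem LinearPMap.sSup_apply_le {R E F : Type*} [Ring R] [AddCommGroup E] [Module R E]
    [AddCommGroup F] [Module R F] [LE F] {N : E → F} {c : Set (E →ₗ.[R] F)} (hne : c.Nonempty)
    (hc : DirectedOn (· ≤ ·) c) (hcN : ∀ p ∈ c, ∀ z : p.domain, p z ≤ N z)
    (z : (LinearPMap.sSup c hc).domain) : LinearPMap.sSup c hc z ≤ N z := by
  have hdir : DirectedOn (· ≤ ·) (LinearPMap.domain '' c) :=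
    directedOn_image.2 (hc.mono LinearPMap.domain_mono.monotone)
  obtain ⟨_, ⟨p, hp, rfl⟩, hzp⟩ := (mem_sSup_of_directed (hne.image _) hdir).1 z.2
  rw [← (LinearPMap.le_sSup hc hp).2 (x := ⟨z, hzp⟩) rfl]
  exact hcN p hp _

namespace NatSublinear

theorem map_zero {X : Type*} [AddMonoid X] {f : X → ℝ} (hf : NatSublinear f) : f 0 = 0 := by
  simpa using hf.nsmul_eq 0 0

variable {X : Type*} [AddCommGroup X] {f : X → ℝ}

theorem ker_le_ker {M : Type*} [AddCommGroup M] (hf : NatSublinear f)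
    {ψ : M →ₗ[ℤ] X} {φ : M →ₗ[ℤ] ℝ} (hφ : ∀ m, φ m ≤ f (ψ m)) : ker ψ ≤ ker φ := by
  intro m hm
  rw [mem_ker] at hm ⊢
  have h₁ := hφ m
  have h₂ := hφ (-m)
  rw [hm, hf.map_zero] at h₁
  rw [map_neg, map_neg, hm, neg_zero, hf.map_zero] at h₂
  linarith

noncomputable def rangeLift {M : Type*} [AddCommGroup M] (hf : NatSublinear f)
    {ψ : M →ₗ[ℤ] X} {φ : M →ₗ[ℤ] ℝ} (hφ : ∀ m, φ m ≤ f (ψ m)) : X →ₗ.[ℤ] ℝ where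
  domain := range ψ
  toFun := ((ker ψ).liftQ φ (hf.ker_le_ker hφ)).comp ψ.quotKerEquivRange.symm.toLinearMap

section rangeLift

variable {M : Type*} [AddCommGroup M] (hf : NatSublinear f)
    {ψ : M →ₗ[ℤ] X} {φ : M →ₗ[ℤ] ℝ} (hφ : ∀ m, φ m ≤ f (ψ m))

theorem rangeLift_apply (m : M) : hf.rangeLift hφ ⟨ψ m, mem_range_self ψ m⟩ = φ m := by
  simp [rangeLift]

theorem rangeLift_le (z : (hf.rangeLift hφ).domain) : hf.rangeLift hφ z ≤ f z := by
  obtain ⟨_, m, rfl⟩ := z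
  rw [rangeLift_apply]
  exact hφ m

end rangeLift

variable {g : X →ₗ.[ℤ] ℝ}

theorem nsmul_add_nsmul_le (hf : NatSublinear f) (hg : ∀ z : g.domain, g z ≤ f z) (x : X)
    (y z : g.domain) (m n : ℕ) :
    n * g z + m * g y ≤ n * f (z - m • x) + m * f (y + n • x) :=
  calc (n : ℝ) * g z + m * g y
    _ = g (n • z + m • y) := by
      rw [g.map_add]
      change _ = g.toFun (n • z) + g.toFun (m • y)
      rw [map_nsmul, map_nsmul, nsmul_eq_mul, nsmul_eq_mul]
      rfl
    _ ≤ f (n • z + m • y) := hg _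
    _ = f (n • ((z : X) - m • x) + m • ((y : X) + n • x)) := by
      congr 1
      simp only [smul_sub, smul_add, smul_smul, mul_comm m n]
      abel
    _ ≤ n * f (z - m • x) + m * f (y + n • x) := by
      rw [← hf.nsmul_eq, ← hf.nsmul_eq]
      exact hf.add_le _ _

theorem exists_add_zsmul_le (hf : NatSublinear f) (hg : ∀ z : g.domain, g z ≤ f z) (x : X) :
    ∃ c : ℝ, ∀ (y : g.domain) (n : ℤ), g y + n * c ≤ f (y + n • x) := by
  obtain ⟨c, hlower, hupper⟩ : (upperBounds (Set.range fun p : g.domain × ℕ+ =>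
      (g p.1 - f (p.1 - (p.2 : ℕ) • x)) / (p.2 : ℕ)) ∩ lowerBounds (Set.range
      fun p : g.domain × ℕ+ => (f (p.1 + (p.2 : ℕ) • x) - g p.1) / (p.2 : ℕ))).Nonempty := by
    refine exists_between_of_forall_le (Set.range_nonempty _) (Set.range_nonempty _) ?_
    rintro _ ⟨⟨z, m⟩, rfl⟩ _ ⟨⟨y, n⟩, rfl⟩
    rw [div_le_div_iff₀ (by positivity) (by positivity)]
    linarith [hf.nsmul_add_nsmul_le hg x y z m n]
  refine ⟨c, fun y n => ?_⟩
  obtain ⟨k, rfl | rfl⟩ := Int.eq_nat_or_neg n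
  · rcases k.eq_zero_or_pos with rfl | hk
    · simpa using hg y
    have : c ≤ (f (y + k • x) - g y) / k := hupper ⟨(y, ⟨k, hk⟩), rfl⟩
    rw [le_div_iff₀ (by positivity)] at this
    simp only [Int.cast_natCast, natCast_zsmul]
    linarith
  · rcases k.eq_zero_or_pos with rfl | hk
    · simpa using hg y
    have : (g y - f (y - k • x)) / k ≤ c := hlower ⟨(y, ⟨k, hk⟩), rfl⟩
    rw [div_le_iff₀ (by positivity)] at this
    simp only [Int.cast_neg, Int.cast_natCast, neg_smul, natCast_zsmul, ← sub_eq_add_neg]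
    linarith

theorem exists_ge_mem_domain (hf : NatSublinear f) (hg : ∀ z : g.domain, g z ≤ f z) (x : X) :
    ∃ g' : X →ₗ.[ℤ] ℝ, g ≤ g' ∧ x ∈ g'.domain ∧ ∀ z : g'.domain, g' z ≤ f z := by
  obtain ⟨c, hc⟩ := hf.exists_add_zsmul_le hg x
  let ψ : g.domain × ℤ →ₗ[ℤ] X := g.domain.subtype.coprod (toSpanSingleton ℤ X x)
  let φ : g.domain × ℤ →ₗ[ℤ] ℝ := g.toFun.coprod (toSpanSingleton ℤ ℝ c)
  have hφ : ∀ p, φ p ≤ f (ψ p) := fun ⟨y, n⟩ => by simpa [φ, ψ, zsmul_eq_mul] using hc y n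
  refine ⟨hf.rangeLift hφ, ⟨fun y hy => ⟨(⟨y, hy⟩, 0), by simp [ψ]⟩, fun y z hyz => ?_⟩,
    ⟨(0, 1), by simp [ψ]⟩, hf.rangeLift_le hφ⟩
  have hz : z = ⟨ψ (y, 0), mem_range_self ψ _⟩ := Subtype.ext (by simp [ψ, hyz])
  rw [hz, rangeLift_apply]
  simp [φ]

theorem exists_ge_domain_eq_top (hf : NatSublinear f) (hg : ∀ z : g.domain, g z ≤ f z) :
    ∃ q ≥ g, q.domain = ⊤ ∧ ∀ z : q.domain, q z ≤ f z := by
  obtain ⟨q, hgq, hq, hmax⟩ := zorn_le_nonempty₀ {q : X →ₗ.[ℤ] ℝ | ∀ z : q.domain, q z ≤ f z}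
    (fun c hcS hc y hy => ⟨LinearPMap.sSup c hc.directedOn,
      LinearPMap.sSup_apply_le ⟨y, hy⟩ hc.directedOn hcS, fun _ => LinearPMap.le_sSup _⟩) g hg
  refine ⟨q, hgq, eq_top_iff'.2 fun x => ?_, hq⟩
  obtain ⟨q', hqq', hxq', hq'⟩ := hf.exists_ge_mem_domain hq x
  exact (hmax hq' hqq').1 hxq'

theorem exists_extension (hf : NatSublinear f) (hg : ∀ z : g.domain, g z ≤ f z) :
    ∃ l : X →ₗ[ℤ] ℝ, (∀ z : g.domain, l z = g z) ∧ ∀ x, l x ≤ f x := by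
  obtain ⟨⟨q_dom, q⟩, ⟨-, hgq⟩, rfl : q_dom = ⊤, hq⟩ := hf.exists_ge_domain_eq_top hg
  exact ⟨q.comp (LinearMap.id.codRestrict ⊤ fun _ => trivial), fun z => (hgq rfl).symm,
    fun x => hq ⟨x, trivial⟩⟩

end NatSublinear

/-- Hahn–Banach theorem for groups: an additive real-valued function on a subgroup dominated by
an ℕ-sublinear function `f` extends to an additive function on the whole group dominated
by `f`. -/
theorem hahn_banach_groups {X : Type*} [AddCommGroup X] (X' : AddSubgroup X)
    (f : X → ℝ)
    (hsub : ∀ x y, f (x + y) ≤ f x + f y)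
    (hhom : ∀ (m : ℕ) (x : X), f (m • x) = (m : ℝ) * f x)
    (h : X' → ℝ) (hadd : ∀ a b : X', h (a + b) = h a + h b)
    (hle : ∀ a : X', h a ≤ f (a : X)) :
    ∃ hbar : X → ℝ, (∀ x y, hbar (x + y) = hbar x + hbar y) ∧
      (∀ a : X', hbar (a : X) = h a) ∧ ∀ x, hbar x ≤ f x := by
  let g : X →ₗ.[ℤ] ℝ := ⟨X'.toIntSubmodule, (AddMonoidHom.mk' h hadd).toIntLinearMap⟩
  obtain ⟨l, hlg, hlf⟩ := NatSublinear.exists_extension ⟨hsub, hhom⟩ (g := g) hle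
  exact ⟨l, map_add l, hlg, hlf⟩
end
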